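/- Error–disturbance relationships for the Arthurs–Kelly process: for every unit vector Ψ in E, the following four inequalities hold: ‖ε_Xi Ψ‖ · ‖δ_P Ψ‖ ≥ ħ/2, ‖ε_Pi Ψ‖ · ‖δ_X Ψ‖ ≥ ħ/2, ‖ε_Xf Ψ‖ · ‖δ_P Ψ‖ ≥ ħ/2, and ‖ε_Pf Ψ‖ · ‖δ_X Ψ‖ ≥ ħ/2. -/

import Mathlib

open scoped ComplexInnerProductSpace

noncomputable section

variable {E : Type*} [NormedAddCommGroup E] [InnerProductSpace ℂ E]

/-- The commutator of two operators. -/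
def commOp (A B : E →ₗ[ℂ] E) : E →ₗ[ℂ] E := A ∘ₗ B - B ∘ₗ A

/-- Final Heisenberg-picture position: `x_f = x + πP`. -/
def xf (x piP : E →ₗ[ℂ] E) : E →ₗ[ℂ] E := x + piP

/-- Final Heisenberg-picture momentum: `p_f = p − πX`. -/
def pf (p piX : E →ₗ[ℂ] E) : E →ₗ[ℂ] E := p - piX

/-- Final X-pointer observable: `μXf = μX + x + (1/2) • πP`. -/
def muXf (muX x piP : E →ₗ[ℂ] E) : E →ₗ[ℂ] E := muX + x + (1 / 2 : ℂ) • piP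

/-- Final P-pointer observable: `μPf = μP + p − (1/2) • πX`. -/
def muPf (muP p piX : E →ₗ[ℂ] E) : E →ₗ[ℂ] E := muP + p - (1 / 2 : ℂ) • piX

/-- Retrodictive X error operator: `ε_Xi = μXf − x`. -/
def epsXi (muX x piP : E →ₗ[ℂ] E) : E →ₗ[ℂ] E := muXf muX x piP - x

/-- Retrodictive P error operator: `ε_Pi = μPf − p`. -/
def epsPi (muP p piX : E →ₗ[ℂ] E) : E →ₗ[ℂ] E := muPf muP p piX - p

/-- Predictive X error operator: `ε_Xf = μXf − x_f`. -/
def epsXf (muX x piP : E →ₗ[ℂ] E) : E →ₗ[ℂ] E := muXf muX x piP - xf x piP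

/-- Predictive P error operator: `ε_Pf = μPf − p_f`. -/
def epsPf (muP p piX : E →ₗ[ℂ] E) : E →ₗ[ℂ] E := muPf muP p piX - pf p piX

/-- X disturbance operator: `δ_X = x_f − x`. -/
def deltaX (x piP : E →ₗ[ℂ] E) : E →ₗ[ℂ] E := xf x piP - x

/-- P disturbance operator: `δ_P = p_f − p`. -/
def deltaP (p piX : E →ₗ[ℂ] E) : E →ₗ[ℂ] E := pf p piX - p

lemma commOp_add_left (A B C : E →ₗ[ℂ] E) :
    commOp (A + B) C = commOp A C + commOp B C := by
  ext v; simp [commOp]; abel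

lemma commOp_smul_left (c : ℂ) (A C : E →ₗ[ℂ] E) :
    commOp (c • A) C = c • commOp A C := by
  ext v; simp [commOp, smul_sub]

lemma commOp_sub_left (A B C : E →ₗ[ℂ] E) :
    commOp (A - B) C = commOp A C - commOp B C := by
  ext v; simp [commOp]; abel

lemma commOp_neg_right (A B : E →ₗ[ℂ] E) :
    commOp A (-B) = -commOp A B := by
  ext v; simp [commOp]; abel

lemma commOp_antisymm (A B : E →ₗ[ℂ] E) :
    commOp A B = -commOp B A := by
  ext v; simp [commOp]

lemma robertson (A B : E →ₗ[ℂ] E) (hA : A.IsSymmetric) (hB : B.IsSymmetric)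
    (c : ℂ) (hc : commOp A B = c • (LinearMap.id : E →ₗ[ℂ] E))
    (Ψ : E) (hΨ : ‖Ψ‖ = 1) :
    ‖c‖ / 2 ≤ ‖A Ψ‖ * ‖B Ψ‖ := by
  have hΨΨ : ⟪Ψ, Ψ⟫ = 1 := by
    rw [inner_self_eq_norm_sq_to_K, hΨ]; norm_num
  have hcΨ : (commOp A B) Ψ = c • Ψ := by rw [hc]; simp
  have h1 : ⟪A Ψ, B Ψ⟫ - ⟪B Ψ, A Ψ⟫ = c := by
    have := congrArg (fun z => ⟪Ψ, z⟫) hcΨ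
    simp only [commOp, LinearMap.sub_apply, LinearMap.comp_apply, inner_sub_right,
      inner_smul_right, hΨΨ, mul_one] at this
    rw [hA Ψ (B Ψ), hB Ψ (A Ψ)]
    exact this
  set z := ⟪A Ψ, B Ψ⟫ with hz
  have h2 : ⟪B Ψ, A Ψ⟫ = (starRingEnd ℂ) z := by rw [hz, inner_conj_symm]
  have h3 : ‖c‖ = 2 * |z.im| := by
    rw [← h1, h2]
    rw [Complex.sub_conj, norm_mul, Complex.norm_I, mul_one, Complex.norm_real,
      Real.norm_eq_abs, abs_mul, abs_two]
  have h4 : |z.im| ≤ ‖z‖ := Complex.abs_im_le_norm z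
  have h5 : ‖z‖ ≤ ‖A Ψ‖ * ‖B Ψ‖ := by
    simpa [hz] using norm_inner_le_norm (𝕜 := ℂ) (A Ψ) (B Ψ)
  rw [h3]
  linarith

/-- Error–disturbance relationships for the Arthurs–Kelly process. -/
theorem arthurs_kelly_error_disturbance_relations
    (hbar : ℝ) (hhbar : 0 < hbar)
    (x p muX piX muP piP : E →ₗ[ℂ] E)
    (hx : x.IsSymmetric) (hp : p.IsSymmetric)
    (hmuX : muX.IsSymmetric) (hpiX : piX.IsSymmetric)
    (hmuP : muP.IsSymmetric) (hpiP : piP.IsSymmetric)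
    (hxp : commOp x p = (Complex.I * (hbar : ℂ)) • (LinearMap.id : E →ₗ[ℂ] E))
    (hmuXpiX : commOp muX piX = (Complex.I * (hbar : ℂ)) • (LinearMap.id : E →ₗ[ℂ] E))
    (hmuPpiP : commOp muP piP = (Complex.I * (hbar : ℂ)) • (LinearMap.id : E →ₗ[ℂ] E))
    (hxmuX : commOp x muX = 0) (hxpiX : commOp x piX = 0)
    (hxmuP : commOp x muP = 0) (hxpiP : commOp x piP = 0)
    (hpmuX : commOp p muX = 0) (hppiX : commOp p piX = 0)
    (hpmuP : commOp p muP = 0) (hppiP : commOp p piP = 0)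
    (hmuXmuP : commOp muX muP = 0) (hmuXpiP : commOp muX piP = 0)
    (hpiXmuP : commOp piX muP = 0) (hpiXpiP : commOp piX piP = 0)
    (Ψ : E) (hΨ : ‖Ψ‖ = 1) :
    hbar / 2 ≤ ‖epsXi muX x piP Ψ‖ * ‖deltaP p piX Ψ‖ ∧
    hbar / 2 ≤ ‖epsPi muP p piX Ψ‖ * ‖deltaX x piP Ψ‖ ∧
    hbar / 2 ≤ ‖epsXf muX x piP Ψ‖ * ‖deltaP p piX Ψ‖ ∧
    hbar / 2 ≤ ‖epsPf muP p piX Ψ‖ * ‖deltaX x piP Ψ‖ := by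
  have habs : ‖Complex.I * (hbar : ℂ)‖ = hbar := by
    simp [abs_of_pos hhbar]
  have habs' : ‖-(Complex.I * (hbar : ℂ))‖ = hbar := by
    simp [abs_of_pos hhbar]
  have hpiPpiX : commOp piP piX = 0 := by
    rw [commOp_antisymm, hpiXpiP, neg_zero]
  -- operator identities
  have e1 : epsXi muX x piP = muX + (1 / 2 : ℂ) • piP := by
    ext v; simp [epsXi, muXf]; abel
  have e2 : epsPi muP p piX = muP - (1 / 2 : ℂ) • piX := by
    ext v; simp [epsPi, muPf]; abel
  have e3 : epsXf muX x piP = muX - (1 / 2 : ℂ) • piP := by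
    ext v
    simp only [epsXf, muXf, xf, LinearMap.sub_apply, LinearMap.add_apply,
      LinearMap.smul_apply]
    module
  have e4 : epsPf muP p piX = muP + (1 / 2 : ℂ) • piX := by
    ext v
    simp only [epsPf, muPf, pf, LinearMap.sub_apply, LinearMap.add_apply,
      LinearMap.smul_apply]
    module
  have d1 : deltaP p piX = -piX := by
    ext v; simp [deltaP, pf]
  have d2 : deltaX x piP = piP := by
    ext v; simp [deltaX, xf]
  -- symmetry facts
  have hhalf : (starRingEnd ℂ) (1 / 2 : ℂ) = 1 / 2 := by
    simp [Complex.ext_iff]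
  have hsymm : ∀ (A B : E →ₗ[ℂ] E), A.IsSymmetric → B.IsSymmetric →
      (A + (1 / 2 : ℂ) • B).IsSymmetric := by
    intro A B hA hB u v
    simp only [LinearMap.add_apply, LinearMap.smul_apply, inner_add_left,
      inner_add_right, inner_smul_left, inner_smul_right, hhalf, hA u v, hB u v]
  have hsymm' : ∀ (A B : E →ₗ[ℂ] E), A.IsSymmetric → B.IsSymmetric →
      (A - (1 / 2 : ℂ) • B).IsSymmetric := by
    intro A B hA hB u v
    simp only [LinearMap.sub_apply, LinearMap.smul_apply, inner_sub_left,
      inner_sub_right, inner_smul_left, inner_smul_right, hhalf, hA u v, hB u v]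
  have hnegpiX : (-piX).IsSymmetric := by
    intro u v; simp [hpiX u v]
  -- commutators
  have c1 : commOp (muX + (1 / 2 : ℂ) • piP) (-piX)
      = (-(Complex.I * (hbar : ℂ))) • (LinearMap.id : E →ₗ[ℂ] E) := by
    rw [commOp_neg_right, commOp_add_left, commOp_smul_left, hmuXpiX, hpiPpiX]
    simp
  have c2 : commOp (muP - (1 / 2 : ℂ) • piX) piP
      = (Complex.I * (hbar : ℂ)) • (LinearMap.id : E →ₗ[ℂ] E) := by
    rw [commOp_sub_left, commOp_smul_left, hmuPpiP, hpiXpiP]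
    simp
  have c3 : commOp (muX - (1 / 2 : ℂ) • piP) (-piX)
      = (-(Complex.I * (hbar : ℂ))) • (LinearMap.id : E →ₗ[ℂ] E) := by
    rw [commOp_neg_right, commOp_sub_left, commOp_smul_left, hmuXpiX, hpiPpiX]
    simp
  have c4 : commOp (muP + (1 / 2 : ℂ) • piX) piP
      = (Complex.I * (hbar : ℂ)) • (LinearMap.id : E →ₗ[ℂ] E) := by
    rw [commOp_add_left, commOp_smul_left, hmuPpiP, hpiXpiP]
    simp
  refine ⟨?_, ?_, ?_, ?_⟩
  · rw [e1, d1]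
    have := robertson _ _ (hsymm muX piP hmuX hpiP) hnegpiX _ c1 Ψ hΨ
    rwa [habs'] at this
  · rw [e2, d2]
    have := robertson _ _ (hsymm' muP piX hmuP hpiX) hpiP _ c2 Ψ hΨ
    rwa [habs] at this
  · rw [e3, d1]
    have := robertson _ _ (hsymm' muX piP hmuX hpiP) hnegpiX _ c3 Ψ hΨ
    rwa [habs'] at this
  · rw [e4, d2]
    have := robertson _ _ (hsymm muP piX hmuP hpiX) hpiP _ c4 Ψ hΨ
    rwa [habs] at this

end
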